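/- Let (u_k, v_k) ∈ H¹(0,1)² solve u_k′ = f_k − (a + ikω) u_k − b v_k, v_k′ = −g_k + (d + ikω) v_k + c u_k with u_k(0) = r₀ v_k(0), v_k(1) = r₁ u_k(1). Then the identity (1 − |r₁|²)|u_k(1)|² + (1 − |r₀|²)|v_k(0)|² + 2∫₀¹ (Re a |u_k|² + Re d |v_k|²) dx = 2 Re ∫₀¹ f_k conj(u_k) dx + 2 Re ∫₀¹ g_k conj(v_k) dx − 2 Re ∫₀¹ b conj(u_k) v_k dx − 2 Re ∫₀¹ c conj(v_k) u_k dx holds. -/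

import Mathlib

open MeasureTheory Complex Filter

noncomputable def μ0 : Measure ℝ := volume.restrict (Set.Ioo 0 1)

/-- `u ∈ H¹(0,1)` with derivative `u' ∈ L²(0,1)` (absolutely continuous representative). -/
def IsH1 (u u' : ℝ → ℂ) : Prop :=
  MemLp u' 2 μ0 ∧ ∀ x ∈ Set.Icc (0:ℝ) 1, u x = u 0 + ∫ t in (0:ℝ)..x, u' t

lemma μ0_def : μ0 = volume.restrict (Set.Ioo 0 1) := rfl
instance : IsFiniteMeasure μ0 := by
  constructor
  rw [μ0_def, Measure.restrict_apply_univ, Real.volume_Ioo]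
  exact ENNReal.ofReal_lt_top
lemma aemem01 : ∀ᵐ x ∂μ0, x ∈ Set.Ioo (0:ℝ) 1 := by
  rw [μ0_def]; exact ae_restrict_mem measurableSet_Ioo
lemma integrable_conj' {f : ℝ → ℂ} (hf : Integrable f μ0) :
    Integrable (fun x => (starRingEnd ℂ) (f x)) μ0 :=
  Integrable.mono' hf.norm (Complex.continuous_conj.comp_aestronglyMeasurable hf.1)
    (Eventually.of_forall fun x => by simp)
lemma bd_exists {f : ℝ → ℂ} (hf : MemLp f ⊤ μ0) :
    ∃ C : ℝ, 0 ≤ C ∧ ∀ᵐ x ∂μ0, ‖f x‖ ≤ C := by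
  refine ⟨(eLpNormEssSup f μ0).toReal, ENNReal.toReal_nonneg, ?_⟩
  have htop : eLpNormEssSup f μ0 ≠ ⊤ := by
    have := hf.2
    rwa [eLpNorm_exponent_top, lt_top_iff_ne_top] at this
  filter_upwards [ae_le_eLpNormEssSup (f := f) (μ := μ0)] with x hx
  have := ENNReal.toReal_mono htop hx
  simpa using this

-- new stage
lemma memTop_conj {f : ℝ → ℂ} (hf : MemLp f ⊤ μ0) :
    MemLp (fun x => (starRingEnd ℂ) (f x)) ⊤ μ0 := by
  obtain ⟨C, -, hC⟩ := bd_exists hf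
  refine memLp_top_of_bound (Complex.continuous_conj.comp_aestronglyMeasurable hf.1) C ?_
  filter_upwards [hC] with x hx; simpa using hx

lemma memTop_mul {f g : ℝ → ℂ} (hf : MemLp f ⊤ μ0) (hg : MemLp g ⊤ μ0) :
    MemLp (fun x => f x * g x) ⊤ μ0 := by
  obtain ⟨C, hC0, hC⟩ := bd_exists hf
  obtain ⟨D, hD0, hD⟩ := bd_exists hg
  refine memLp_top_of_bound (hf.1.mul hg.1) (C * D) ?_
  filter_upwards [hC, hD] with x h1 h2
  calc ‖f x * g x‖ = ‖f x‖ * ‖g x‖ := norm_mul _ _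
    _ ≤ C * D := mul_le_mul h1 h2 (norm_nonneg _) hC0

lemma memTop_mul_int {f g : ℝ → ℂ} (hf : MemLp f ⊤ μ0) (hg : Integrable g μ0) :
    Integrable (fun x => f x * g x) μ0 := by
  obtain ⟨C, -, hC⟩ := bd_exists hf
  exact hg.bdd_mul hf.1 hC

lemma int_mul_memTop {f g : ℝ → ℂ} (hf : Integrable f μ0) (hg : MemLp g ⊤ μ0) :
    Integrable (fun x => f x * g x) μ0 :=
  (memTop_mul_int hg hf).congr (Eventually.of_forall fun x => mul_comm _ _)

lemma double_integral (φ : ℝ → ℂ) (hφ : Integrable φ μ0) :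
    (∫ t, φ t * (starRingEnd ℂ) (∫ s in (0:ℝ)..t, φ s) ∂μ0)
      + (∫ t, (starRingEnd ℂ) (φ t) * (∫ s in (0:ℝ)..t, φ s) ∂μ0)
    = (∫ t, φ t ∂μ0) * (starRingEnd ℂ) (∫ t, φ t ∂μ0) := by
  have hG1 : ∀ t ∈ Set.Ioo (0:ℝ) 1,
      (∫ s in (0:ℝ)..t, φ s) = ∫ s, Set.indicator (Set.Ioc 0 t) φ s ∂μ0 := by
    intro t ht
    have hss : Set.Ioc 0 t ⊆ Set.Ioo (0:ℝ) 1 := fun s hs => ⟨hs.1, lt_of_le_of_lt hs.2 ht.2⟩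
    rw [intervalIntegral.integral_of_le ht.1.le, integral_indicator measurableSet_Ioc,
      μ0_def, Measure.restrict_restrict measurableSet_Ioc,
      Set.inter_eq_self_of_subset_left hss]
  have hG2 : ∀ t ∈ Set.Ioo (0:ℝ) 1,
      (∫ s in (0:ℝ)..t, φ s) = ∫ s, Set.indicator (Set.Ioo 0 t) φ s ∂μ0 := by
    intro t ht
    have hss : Set.Ioo 0 t ⊆ Set.Ioo (0:ℝ) 1 := fun s hs => ⟨hs.1, hs.2.trans ht.2⟩
    rw [intervalIntegral.integral_of_le ht.1.le, integral_Ioc_eq_integral_Ioo,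
      integral_indicator measurableSet_Ioo,
      μ0_def, Measure.restrict_restrict measurableSet_Ioo,
      Set.inter_eq_self_of_subset_left hss]
  set F₁ : ℝ → ℝ → ℂ := fun t s => Set.indicator (Set.Ioc 0 t) (fun s => φ t * (starRingEnd ℂ) (φ s)) s with hF₁def
  set F₂ : ℝ → ℝ → ℂ := fun t s => Set.indicator (Set.Ioo 0 t) (fun s => (starRingEnd ℂ) (φ t) * φ s) s with hF₂def
  have hT1 : (∫ t, φ t * (starRingEnd ℂ) (∫ s in (0:ℝ)..t, φ s) ∂μ0)
      = ∫ t, ∫ s, F₁ t s ∂μ0 ∂μ0 := by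
    refine integral_congr_ae ?_
    filter_upwards [aemem01] with t ht
    rw [hG1 t ht, ← integral_conj, ← integral_const_mul]
    congr 1; funext s
    by_cases hs : s ∈ Set.Ioc 0 t <;> simp [hF₁def, hs]
  have hT2 : (∫ t, (starRingEnd ℂ) (φ t) * (∫ s in (0:ℝ)..t, φ s) ∂μ0)
      = ∫ t, ∫ s, F₂ t s ∂μ0 ∂μ0 := by
    refine integral_congr_ae ?_
    filter_upwards [aemem01] with t ht
    rw [hG2 t ht, ← integral_const_mul]
    congr 1; funext s
    by_cases hs : s ∈ Set.Ioo 0 t <;> simp [hF₂def, hs]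
  have hbase : Integrable (fun p : ℝ × ℝ => φ p.1 * (starRingEnd ℂ) (φ p.2)) (μ0.prod μ0) :=
    hφ.mul_prod (integrable_conj' hφ)
  have hbase2 : Integrable (fun p : ℝ × ℝ => (starRingEnd ℂ) (φ p.1) * φ p.2) (μ0.prod μ0) :=
    (integrable_conj' hφ).mul_prod hφ
  have hF1 : Integrable (Function.uncurry F₁) (μ0.prod μ0) := by
    have : Function.uncurry F₁ = Set.indicator {p : ℝ × ℝ | 0 < p.2 ∧ p.2 ≤ p.1}
        (fun p => φ p.1 * (starRingEnd ℂ) (φ p.2)) := by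
      funext p
      by_cases h : 0 < p.2 ∧ p.2 ≤ p.1 <;>
        simp [Function.uncurry, hF₁def, Set.indicator_apply, Set.mem_Ioc, h]
    rw [this]
    exact hbase.indicator ((measurableSet_lt measurable_const measurable_snd).inter
      (measurableSet_le measurable_snd measurable_fst))
  have hF2 : Integrable (Function.uncurry F₂) (μ0.prod μ0) := by
    have : Function.uncurry F₂ = Set.indicator {p : ℝ × ℝ | 0 < p.2 ∧ p.2 < p.1}
        (fun p => (starRingEnd ℂ) (φ p.1) * φ p.2) := by
      funext p
      by_cases h : 0 < p.2 ∧ p.2 < p.1 <;>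
        simp [Function.uncurry, hF₂def, Set.indicator_apply, Set.mem_Ioo, h]
    rw [this]
    exact hbase2.indicator ((measurableSet_lt measurable_const measurable_snd).inter
      (measurableSet_lt measurable_snd measurable_fst))
  have hF2' : Integrable (fun p : ℝ × ℝ => F₂ p.2 p.1) (μ0.prod μ0) := by
    have : (fun p : ℝ × ℝ => F₂ p.2 p.1) = Set.indicator {p : ℝ × ℝ | 0 < p.1 ∧ p.1 < p.2}
        (fun p => (starRingEnd ℂ) (φ p.2) * φ p.1) := by
      funext p
      by_cases h : 0 < p.1 ∧ p.1 < p.2 <;>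
        simp [hF₂def, Set.indicator_apply, Set.mem_Ioo, h]
    rw [this]
    refine Integrable.indicator ?_ ((measurableSet_lt measurable_const measurable_fst).inter
      (measurableSet_lt measurable_fst measurable_snd))
    exact hbase.congr (Eventually.of_forall fun p => mul_comm _ _)
  have haeprod : ∀ᵐ p : ℝ × ℝ ∂(μ0.prod μ0), p ∈ Set.Ioo (0:ℝ) 1 ×ˢ Set.Ioo (0:ℝ) 1 := by
    rw [μ0_def, Measure.prod_restrict]
    exact ae_restrict_mem (measurableSet_Ioo.prod measurableSet_Ioo)
  have hswap : (∫ t, ∫ s, F₂ t s ∂μ0 ∂μ0) = ∫ p : ℝ × ℝ, F₂ p.2 p.1 ∂(μ0.prod μ0) := by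
    rw [integral_integral_swap hF2]
    exact integral_integral hF2'
  have hF1'' : Integrable (fun p : ℝ × ℝ => F₁ p.1 p.2) (μ0.prod μ0) := hF1
  rw [hT1, hT2, hswap, integral_integral hF1, ← integral_add hF1'' hF2']
  have hcongr : ∫ p : ℝ × ℝ, (F₁ p.1 p.2 + F₂ p.2 p.1) ∂(μ0.prod μ0)
      = ∫ p : ℝ × ℝ, φ p.1 * (starRingEnd ℂ) (φ p.2) ∂(μ0.prod μ0) := by
    refine integral_congr_ae ?_
    filter_upwards [haeprod] with p hp
    obtain ⟨h1, h2⟩ := hp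
    by_cases h : p.2 ≤ p.1
    · have c1 : 0 < p.2 ∧ p.2 ≤ p.1 := ⟨h2.1, h⟩
      have c2 : ¬(0 < p.1 ∧ p.1 < p.2) := fun hc => (not_lt.mpr h) hc.2
      simp [hF₁def, hF₂def, Set.indicator_apply, Set.mem_Ioc, Set.mem_Ioo, c1, c2]
    · have c1 : ¬(0 < p.2 ∧ p.2 ≤ p.1) := fun hc => h hc.2
      have c2 : 0 < p.1 ∧ p.1 < p.2 := ⟨h1.1, not_le.mp h⟩
      simp [hF₁def, hF₂def, Set.indicator_apply, Set.mem_Ioc, Set.mem_Ioo, c1, c2, mul_comm]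
  rw [hcongr]
  have hpm := integral_prod_mul (μ := μ0) (ν := μ0) φ (fun x => (starRingEnd ℂ) (φ x))
  rw [hpm, integral_conj]


lemma primitive_memTop {φ : ℝ → ℂ} (hφ : Integrable φ μ0) :
    MemLp (fun t => ∫ s in (0:ℝ)..t, φ s) ⊤ μ0 := by
  have hIcc : IntegrableOn φ (Set.uIcc (0:ℝ) 1) volume := by
    rw [Set.uIcc_of_le zero_le_one]
    exact (integrableOn_Icc_iff_integrableOn_Ioo).mpr hφ
  have hcont : ContinuousOn (fun t => ∫ s in (0:ℝ)..t, φ s) (Set.Icc 0 1) := by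
    have := intervalIntegral.continuousOn_primitive_interval hIcc
    rwa [Set.uIcc_of_le zero_le_one] at this
  obtain ⟨C, hC⟩ := isCompact_Icc.exists_bound_of_continuousOn hcont
  refine memLp_top_of_bound ?_ C ?_
  · rw [μ0_def]
    exact (hcont.mono Set.Ioo_subset_Icc_self).aestronglyMeasurable measurableSet_Ioo
  · filter_upwards [aemem01] with x hx
    exact hC x (Set.Ioo_subset_Icc_self hx)

lemma IsH1.memTop {u u' : ℝ → ℂ} (hu : IsH1 u u') (hu' : Integrable u' μ0) :
    MemLp u ⊤ μ0 := by
  have h : MemLp (fun t => u 0 + ∫ s in (0:ℝ)..t, u' s) ⊤ μ0 :=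
    (memLp_const (u 0)).add (primitive_memTop hu')
  refine h.ae_eq ?_
  filter_upwards [aemem01] with t ht
  exact (hu.2 t (Set.Ioo_subset_Icc_self ht)).symm

lemma normsq_c (z : ℂ) : ((‖z‖ ^ 2 : ℝ) : ℂ) = z * (starRingEnd ℂ) z := by
  rw [Complex.mul_conj]
  norm_cast
  rw [Complex.normSq_eq_norm_sq]

lemma energy {u u' : ℝ → ℂ} (hu : IsH1 u u') (hu' : Integrable u' μ0) :
    ((‖u 1‖ ^ 2 : ℝ) : ℂ) - ((‖u 0‖ ^ 2 : ℝ) : ℂ)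
      = ∫ t, (u' t * (starRingEnd ℂ) (u t) + (starRingEnd ℂ) (u' t) * u t) ∂μ0 := by
  set g : ℝ → ℂ := fun t => ∫ s in (0:ℝ)..t, u' s with hgdef
  set Φ : ℂ := ∫ t, u' t ∂μ0 with hΦdef
  have hΦ : g 1 = Φ := by
    rw [hgdef, hΦdef]
    simp only
    rw [intervalIntegral.integral_of_le zero_le_one, integral_Ioc_eq_integral_Ioo, μ0_def]
  have h1 : u 1 = u 0 + Φ := by
    rw [← hΦ]; exact hu.2 1 ⟨zero_le_one, le_refl 1⟩
  have hgTop : MemLp g ⊤ μ0 := primitive_memTop hu'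
  have hint1 : Integrable (fun t => u' t * (starRingEnd ℂ) (u 0)) μ0 := hu'.mul_const _
  have hint2 : Integrable (fun t => (starRingEnd ℂ) (u' t) * u 0) μ0 :=
    (integrable_conj' hu').mul_const _
  have hint3 : Integrable (fun t => u' t * (starRingEnd ℂ) (g t)) μ0 :=
    int_mul_memTop hu' (memTop_conj hgTop)
  have hint4 : Integrable (fun t => (starRingEnd ℂ) (u' t) * g t) μ0 :=
    int_mul_memTop (integrable_conj' hu') hgTop
  have hint12 : Integrable (fun t => u' t * (starRingEnd ℂ) (u 0) + (starRingEnd ℂ) (u' t) * u 0) μ0 :=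
    hint1.add hint2
  have hint34 : Integrable (fun t => u' t * (starRingEnd ℂ) (g t) + (starRingEnd ℂ) (u' t) * g t) μ0 :=
    hint3.add hint4
  have hsplit : (∫ t, (u' t * (starRingEnd ℂ) (u t) + (starRingEnd ℂ) (u' t) * u t) ∂μ0)
      = ((∫ t, u' t * (starRingEnd ℂ) (u 0) ∂μ0) + (∫ t, (starRingEnd ℂ) (u' t) * u 0 ∂μ0))
        + ((∫ t, u' t * (starRingEnd ℂ) (g t) ∂μ0) + (∫ t, (starRingEnd ℂ) (u' t) * g t ∂μ0)) := by
    calc (∫ t, (u' t * (starRingEnd ℂ) (u t) + (starRingEnd ℂ) (u' t) * u t) ∂μ0)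
        = ∫ t, ((u' t * (starRingEnd ℂ) (u 0) + (starRingEnd ℂ) (u' t) * u 0)
            + (u' t * (starRingEnd ℂ) (g t) + (starRingEnd ℂ) (u' t) * g t)) ∂μ0 := by
          refine integral_congr_ae ?_
          filter_upwards [aemem01] with t ht
          have hut : u t = u 0 + g t := hu.2 t (Set.Ioo_subset_Icc_self ht)
          rw [hut, map_add]
          ring
      _ = _ := by
          rw [integral_add hint12 hint34, integral_add hint1 hint2, integral_add hint3 hint4]
  rw [hsplit, double_integral u' hu', integral_mul_const, integral_mul_const, integral_conj,
    normsq_c, normsq_c, h1, map_add]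
  rw [← hΦdef]
  ring

lemma re_mul_normsq (w z : ℂ) :
    (w * (z * (starRingEnd ℂ) z)).re = w.re * ‖z‖ ^ 2 := by
  rw [Complex.mul_conj, Complex.mul_re, Complex.ofReal_re, Complex.ofReal_im, mul_zero, sub_zero,
    Complex.normSq_eq_norm_sq]

/-- the basic energy identity for solutions of the Fourier-mode system with
reflection boundary conditions. -/
theorem stmt9 (ω : ℝ) (hω : 0 < ω) (k : ℤ) (a b c d : ℝ → ℂ)
    (ha : MemLp a ⊤ μ0) (hb : MemLp b ⊤ μ0) (hc : MemLp c ⊤ μ0) (hd : MemLp d ⊤ μ0)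
    (fk gk : ℝ → ℂ) (hf : MemLp fk 2 μ0) (hg : MemLp gk 2 μ0) (r₀ r₁ : ℂ)
    (u u' v v' : ℝ → ℂ) (hu : IsH1 u u') (hv : IsH1 v v')
    (hequ : ∀ᵐ x ∂μ0, u' x = fk x - (a x + ((k : ℝ) * ω : ℝ) * Complex.I) * u x - b x * v x)
    (heqv : ∀ᵐ x ∂μ0, v' x = -gk x + (d x + ((k : ℝ) * ω : ℝ) * Complex.I) * v x + c x * u x)
    (hbc0 : u 0 = r₀ * v 0) (hbc1 : v 1 = r₁ * u 1) :
    (1 - ‖r₁‖ ^ 2) * ‖u 1‖ ^ 2 +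
        (1 - ‖r₀‖ ^ 2) * ‖v 0‖ ^ 2 +
        2 * ∫ x, ((a x).re * ‖u x‖ ^ 2 + (d x).re * ‖v x‖ ^ 2) ∂μ0 =
      2 * (∫ x, fk x * starRingEnd ℂ (u x) ∂μ0).re +
        2 * (∫ x, gk x * starRingEnd ℂ (v x) ∂μ0).re -
        2 * (∫ x, b x * starRingEnd ℂ (u x) * v x ∂μ0).re -
        2 * (∫ x, c x * starRingEnd ℂ (v x) * u x ∂μ0).re := by
  have hu' : Integrable u' μ0 := hu.1.integrable one_le_two
  have hv' : Integrable v' μ0 := hv.1.integrable one_le_two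
  have huT : MemLp u ⊤ μ0 := hu.memTop hu'
  have hvT : MemLp v ⊤ μ0 := hv.memTop hv'
  have huC : MemLp (fun x => (starRingEnd ℂ) (u x)) ⊤ μ0 := memTop_conj huT
  have hvC : MemLp (fun x => (starRingEnd ℂ) (v x)) ⊤ μ0 := memTop_conj hvT
  -- integrability of the various products
  have hP : Integrable (fun x => fk x * starRingEnd ℂ (u x)) μ0 :=
    int_mul_memTop (hf.integrable one_le_two) huC
  have hQ : Integrable (fun x => a x * (u x * starRingEnd ℂ (u x))) μ0 :=
    memTop_mul_int ha (memTop_mul_int huT (huC.integrable le_top))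
  have hR : Integrable (fun x => b x * starRingEnd ℂ (u x) * v x) μ0 :=
    int_mul_memTop (memTop_mul_int hb (huC.integrable le_top)) hvT
  have hP2 : Integrable (fun x => gk x * starRingEnd ℂ (v x)) μ0 :=
    int_mul_memTop (hg.integrable one_le_two) hvC
  have hQ2 : Integrable (fun x => d x * (v x * starRingEnd ℂ (v x))) μ0 :=
    memTop_mul_int hd (memTop_mul_int hvT (hvC.integrable le_top))
  have hR2 : Integrable (fun x => c x * starRingEnd ℂ (v x) * u x) μ0 :=
    int_mul_memTop (memTop_mul_int hc (hvC.integrable le_top)) huT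
  have hP' := integrable_conj' hP
  have hPP : Integrable (fun x => fk x * starRingEnd ℂ (u x)
      + (starRingEnd ℂ) (fk x * starRingEnd ℂ (u x))) μ0 := hP.add (integrable_conj' hP)
  have hQQ : Integrable (fun x => a x * (u x * starRingEnd ℂ (u x))
      + (starRingEnd ℂ) (a x * (u x * starRingEnd ℂ (u x)))) μ0 := hQ.add (integrable_conj' hQ)
  have hRR : Integrable (fun x => b x * starRingEnd ℂ (u x) * v x
      + (starRingEnd ℂ) (b x * starRingEnd ℂ (u x) * v x)) μ0 := hR.add (integrable_conj' hR)
  have hPQ : Integrable (fun x => (fk x * starRingEnd ℂ (u x)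
        + (starRingEnd ℂ) (fk x * starRingEnd ℂ (u x)))
      - (a x * (u x * starRingEnd ℂ (u x))
        + (starRingEnd ℂ) (a x * (u x * starRingEnd ℂ (u x))))) μ0 := hPP.sub hQQ
  have hPP2 : Integrable (fun x => gk x * starRingEnd ℂ (v x)
      + (starRingEnd ℂ) (gk x * starRingEnd ℂ (v x))) μ0 := hP2.add (integrable_conj' hP2)
  have hN2 : Integrable (fun x => -(gk x * starRingEnd ℂ (v x)
      + (starRingEnd ℂ) (gk x * starRingEnd ℂ (v x)))) μ0 := hPP2.neg
  have hQQ2 : Integrable (fun x => d x * (v x * starRingEnd ℂ (v x))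
      + (starRingEnd ℂ) (d x * (v x * starRingEnd ℂ (v x)))) μ0 := hQ2.add (integrable_conj' hQ2)
  have hRR2 : Integrable (fun x => c x * starRingEnd ℂ (v x) * u x
      + (starRingEnd ℂ) (c x * starRingEnd ℂ (v x) * u x)) μ0 := hR2.add (integrable_conj' hR2)
  have hNQ2 : Integrable (fun x => -(gk x * starRingEnd ℂ (v x)
        + (starRingEnd ℂ) (gk x * starRingEnd ℂ (v x)))
      + (d x * (v x * starRingEnd ℂ (v x))
        + (starRingEnd ℂ) (d x * (v x * starRingEnd ℂ (v x))))) μ0 := hN2.add hQQ2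
  have hQ' := integrable_conj' hQ
  have hR' := integrable_conj' hR
  have hP2' := integrable_conj' hP2
  have hQ2' := integrable_conj' hQ2
  have hR2' := integrable_conj' hR2
  -- rewrite the energy integral for u
  have hEU : (∫ t, (u' t * (starRingEnd ℂ) (u t) + (starRingEnd ℂ) (u' t) * u t) ∂μ0)
      = ((∫ x, fk x * starRingEnd ℂ (u x) ∂μ0)
            + (starRingEnd ℂ) (∫ x, fk x * starRingEnd ℂ (u x) ∂μ0))
        - ((∫ x, a x * (u x * starRingEnd ℂ (u x)) ∂μ0)
            + (starRingEnd ℂ) (∫ x, a x * (u x * starRingEnd ℂ (u x)) ∂μ0))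
        - ((∫ x, b x * starRingEnd ℂ (u x) * v x ∂μ0)
            + (starRingEnd ℂ) (∫ x, b x * starRingEnd ℂ (u x) * v x ∂μ0)) := by
    rw [← integral_conj, ← integral_conj, ← integral_conj,
      ← integral_add hP hP', ← integral_add hQ hQ', ← integral_add hR hR',
      ← integral_sub hPP hQQ, ← integral_sub hPQ hRR]
    refine integral_congr_ae ?_
    filter_upwards [hequ] with x hx
    rw [hx]
    simp only [map_sub, map_add, map_mul, Complex.conj_conj, Complex.conj_ofReal, Complex.conj_I]
    ring
  have hEV : (∫ t, (v' t * (starRingEnd ℂ) (v t) + (starRingEnd ℂ) (v' t) * v t) ∂μ0)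
      = -((∫ x, gk x * starRingEnd ℂ (v x) ∂μ0)
            + (starRingEnd ℂ) (∫ x, gk x * starRingEnd ℂ (v x) ∂μ0))
        + ((∫ x, d x * (v x * starRingEnd ℂ (v x)) ∂μ0)
            + (starRingEnd ℂ) (∫ x, d x * (v x * starRingEnd ℂ (v x)) ∂μ0))
        + ((∫ x, c x * starRingEnd ℂ (v x) * u x ∂μ0)
            + (starRingEnd ℂ) (∫ x, c x * starRingEnd ℂ (v x) * u x ∂μ0)) := by
    rw [← integral_conj, ← integral_conj, ← integral_conj,
      ← integral_add hP2 hP2', ← integral_add hQ2 hQ2', ← integral_add hR2 hR2',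
      ← integral_neg, ← integral_add hN2 hQQ2, ← integral_add hNQ2 hRR2]
    refine integral_congr_ae ?_
    filter_upwards [heqv] with x hx
    rw [hx]
    simp only [map_sub, map_add, map_mul, map_neg, Complex.conj_conj, Complex.conj_ofReal,
      Complex.conj_I]
    ring
  have EU := energy hu hu'
  have EV := energy hv hv'
  rw [hEU] at EU
  rw [hEV] at EV
  have EUre := congrArg Complex.re EU
  have EVre := congrArg Complex.re EV
  simp only [Complex.sub_re, Complex.add_re, Complex.neg_re, Complex.ofReal_re,
    Complex.conj_re] at EUre EVre
  -- identify the quadratic real integrals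
  have hQre : (∫ x, a x * (u x * starRingEnd ℂ (u x)) ∂μ0).re
      = ∫ x, (a x).re * ‖u x‖ ^ 2 ∂μ0 := by
    have h := integral_re (μ := μ0) hQ
    simp only [RCLike.re_eq_complex_re] at h
    rw [← h]
    exact integral_congr_ae (Eventually.of_forall fun x => re_mul_normsq _ _)
  have hQ2re : (∫ x, d x * (v x * starRingEnd ℂ (v x)) ∂μ0).re
      = ∫ x, (d x).re * ‖v x‖ ^ 2 ∂μ0 := by
    have h := integral_re (μ := μ0) hQ2
    simp only [RCLike.re_eq_complex_re] at h
    rw [← h]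
    exact integral_congr_ae (Eventually.of_forall fun x => re_mul_normsq _ _)
  rw [hQre] at EUre
  rw [hQ2re] at EVre
  have hA : Integrable (fun x => (a x).re * ‖u x‖ ^ 2) μ0 := by
    have h := hQ.re
    simp only [RCLike.re_eq_complex_re] at h
    exact h.congr (Eventually.of_forall fun x => re_mul_normsq _ _)
  have hD : Integrable (fun x => (d x).re * ‖v x‖ ^ 2) μ0 := by
    have h := hQ2.re
    simp only [RCLike.re_eq_complex_re] at h
    exact h.congr (Eventually.of_forall fun x => re_mul_normsq _ _)
  have hsum : (∫ x, ((a x).re * ‖u x‖ ^ 2 + (d x).re * ‖v x‖ ^ 2) ∂μ0)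
      = (∫ x, (a x).re * ‖u x‖ ^ 2 ∂μ0) + ∫ x, (d x).re * ‖v x‖ ^ 2 ∂μ0 :=
    integral_add hA hD
  have hb0 : ‖u 0‖ ^ 2 = ‖r₀‖ ^ 2 * ‖v 0‖ ^ 2 := by
    rw [hbc0, norm_mul, mul_pow]
  have hb1 : ‖v 1‖ ^ 2 = ‖r₁‖ ^ 2 * ‖u 1‖ ^ 2 := by
    rw [hbc1, norm_mul, mul_pow]
  rw [hb0] at EUre
  rw [hb1] at EVre
  rw [hsum]
  linear_combination EUre - EVre
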